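/- Let G be a connected chordal graph and let U1U2 and U3U4 be two distinct edges of the layer structure of C(G) having the same label S. Then the units in {U1,U2,U3,U4} are pairwise adjacent in the layer structure, and every edge among them has label S. -/

import Mathlib

open SimpleGraph

attribute [local instance] Classical.propDecidable
set_option linter.unusedSectionVars false

variable {V : Type*} [Fintype V] [DecidableEq V]

/-- A graph is chordal if it has no induced cycle of length at least 4. -/
def IsChordal (G : SimpleGraph V) : Prop :=
  ∀ n : ℕ, 4 ≤ n →
    ¬ ∃ f : Fin n ↪ V, ∀ i j, (cycleGraph n).Adj i j ↔ G.Adj (f i) (f j)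

/-- `K` is a maximal clique of `G`. -/
def MaxClique (G : SimpleGraph V) (K : Finset V) : Prop :=
  G.IsClique (K : Set V) ∧ ∀ K' : Finset V, G.IsClique (K' : Set V) → K ⊆ K' → K = K'

/-- The type of maximal cliques of `G`. -/
abbrev CV (G : SimpleGraph V) := {K : Finset V // MaxClique G K}

/-- `S` is a `u`-`v` separator of `G`: `u, v ∉ S` and every `u`-`v` walk meets `S`. -/
def Separates (G : SimpleGraph V) (S : Finset V) (u v : V) : Prop :=
  u ∉ S ∧ v ∉ S ∧ ∀ p : G.Walk u v, ∃ x ∈ p.support, x ∈ S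

lemma Separates.symm' {G : SimpleGraph V} {S : Finset V} {u v : V}
    (h : Separates G S u v) : Separates G S v u := by
  obtain ⟨hu, hv, h⟩ := h
  refine ⟨hv, hu, fun p => ?_⟩
  obtain ⟨x, hx, hxS⟩ := h p.reverse
  refine ⟨x, ?_, hxS⟩
  simpa using hx

/-- `S` is a minimal `u`-`v` separator of `G`. -/
def MinSeparates (G : SimpleGraph V) (S : Finset V) (u v : V) : Prop :=
  Separates G S u v ∧ ∀ S' : Finset V, S' ⊂ S → ¬ Separates G S' u v

lemma MinSeparates.symm' {G : SimpleGraph V} {S : Finset V} {u v : V}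
    (h : MinSeparates G S u v) : MinSeparates G S v u :=
  ⟨h.1.symm', fun S' hS' hc => h.2 S' hS' hc.symm'⟩

/-- The clique graph `C(G)` of `G`: vertices are the maximal cliques; `K` and `K'` are
adjacent iff `K ∩ K'` is a minimal `u`-`v` separator for all `u ∈ K \ K'`, `v ∈ K' \ K`. -/
def cliqueGraph (G : SimpleGraph V) : SimpleGraph (CV G) where
  Adj K K' := K ≠ K' ∧
    ∀ u ∈ K.1 \ K'.1, ∀ v ∈ K'.1 \ K.1, MinSeparates G (K.1 ∩ K'.1) u v
  symm := by
    constructor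
    rintro K K' ⟨hne, h⟩
    refine ⟨hne.symm, fun u hu v hv => ?_⟩
    rw [Finset.inter_comm]
    exact (h v hv u hu).symm'
  loopless := by constructor; rintro K ⟨hne, -⟩; exact hne rfl

/-- A clique tree of `G`: a tree on the maximal cliques of `G` such that for every vertex
`v`, the maximal cliques containing `v` induce a connected subgraph (a subtree). -/
def IsCliqueTree (G : SimpleGraph V) (T : SimpleGraph (CV G)) : Prop :=
  T.IsTree ∧ ∀ v : V, (T.induce {K : CV G | v ∈ K.1}).Connected

/-- `C(G) ⊖ S`: the clique graph with all edges labeled `S` deleted. -/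
def deleteLabel (G : SimpleGraph V) (S : Finset V) : SimpleGraph (CV G) where
  Adj K K' := (cliqueGraph G).Adj K K' ∧ K.1 ∩ K'.1 ≠ S
  symm := by
    constructor
    rintro K K' ⟨h, hS⟩
    exact ⟨h.symm, by rwa [Finset.inter_comm]⟩
  loopless := by constructor; rintro K ⟨h, -⟩; exact (cliqueGraph G).loopless.irrefl K h

/-- `w` is the minimum edge weight of `C(G)` (weights are `|K ∩ K'|`). -/
def IsMinEdgeWeight (G : SimpleGraph V) (w : ℕ) : Prop :=
  (∃ K K' : CV G, (cliqueGraph G).Adj K K' ∧ (K.1 ∩ K'.1).card = w) ∧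
    ∀ K K' : CV G, (cliqueGraph G).Adj K K' → w ≤ (K.1 ∩ K'.1).card

/-- `C(G)` with all edges of (minimum) weight `w` deleted; its connected components are
the units. -/
def unitGraph (G : SimpleGraph V) (w : ℕ) : SimpleGraph (CV G) where
  Adj K K' := (cliqueGraph G).Adj K K' ∧ (K.1 ∩ K'.1).card ≠ w
  symm := by
    constructor
    rintro K K' ⟨h, hw⟩
    exact ⟨h.symm, by rwa [Finset.inter_comm]⟩
  loopless := by constructor; rintro K ⟨h, -⟩; exact (cliqueGraph G).loopless.irrefl K h

/-- The type of units. -/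
abbrev LUnit (G : SimpleGraph V) (w : ℕ) := (unitGraph G w).ConnectedComponent

/-- The unit containing a maximal clique `K`. -/
def umk (G : SimpleGraph V) (w : ℕ) (K : CV G) : LUnit G w :=
  (unitGraph G w).connectedComponentMk K

/-- The layer structure: units are its vertices; two units are adjacent iff some
edge of `C(G)` crosses them. -/
def layerGraph (G : SimpleGraph V) (w : ℕ) : SimpleGraph (LUnit G w) where
  Adj U U' := U ≠ U' ∧ ∃ K K' : CV G,
    (cliqueGraph G).Adj K K' ∧ umk G w K = U ∧ umk G w K' = U'
  symm := by
    constructor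
    rintro U U' ⟨hne, K, K', hadj, hK, hK'⟩
    exact ⟨hne.symm, K', K, hadj.symm, hK', hK⟩
  loopless := by constructor; rintro U ⟨hne, -⟩; exact hne rfl

/-- All edges of `C(G)` crossing `U` and `U'` have the label `S`. -/
def CrossLabel (G : SimpleGraph V) (w : ℕ) (U U' : LUnit G w) (S : Finset V) : Prop :=
  ∀ K K' : CV G, (cliqueGraph G).Adj K K' → umk G w K = U → umk G w K' = U' →
    K.1 ∩ K'.1 = S

/-- `𝒱(U)`: the vertices of `G` contained in some maximal clique of the unit `U`. -/
def unitVerts (G : SimpleGraph V) (w : ℕ) (U : LUnit G w) : Set V :=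
  {x | ∃ K : CV G, umk G w K = U ∧ x ∈ K.1}

/-- An MCS ordering of `G`: at each step, the visited vertex has the maximum number of
already visited neighbors among unvisited vertices. -/
def IsMCSOrdering (G : SimpleGraph V) (σ : Fin (Fintype.card V) ≃ V) : Prop :=
  ∀ i j : Fin (Fintype.card V), i ≤ j →
    (Finset.univ.filter fun l => l < i ∧ G.Adj (σ l) (σ j)).card ≤
      (Finset.univ.filter fun l => l < i ∧ G.Adj (σ l) (σ i)).card

/-- A Prim ordering of `C(G)`: each vertex after the first is incident to an edge of
maximum weight among all edges between visited and unvisited vertices. -/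
def IsPrimOrdering (G : SimpleGraph V) (π : Fin (Fintype.card (CV G)) ≃ CV G) : Prop :=
  ∀ i : Fin (Fintype.card (CV G)), 0 < (i : ℕ) →
    ∃ j, j < i ∧ (cliqueGraph G).Adj (π j) (π i) ∧
      ∀ j' k, j' < i → i ≤ k → (cliqueGraph G).Adj (π j') (π k) →
        ((π j').1 ∩ (π k).1).card ≤ ((π j).1 ∩ (π i).1).card

/-- The position in `π` of the first maximal clique containing `x`. -/
noncomputable def firstIdx (G : SimpleGraph V)
    (π : Fin (Fintype.card (CV G)) ≃ CV G) (x : V) : ℕ :=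
  sInf {j : ℕ | ∃ h : j < Fintype.card (CV G), x ∈ (π ⟨j, h⟩).1}

/-- `σ` is a generation of `π`. -/
def IsGeneration (G : SimpleGraph V) (π : Fin (Fintype.card (CV G)) ≃ CV G)
    (σ : Fin (Fintype.card V) ≃ V) : Prop :=
  ∀ x y : V, firstIdx G π x < firstIdx G π y → σ.symm x < σ.symm y

/-- `σ` is a linear extension of the relation `R`. -/
def ExtendsR (R : V → V → Prop) (σ : Fin (Fintype.card V) ≃ V) : Prop :=
  ∀ x y : V, R x y → x ≠ y → σ.symm x < σ.symm y

/-- `π` respects `R`. -/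
def RespectsR (G : SimpleGraph V) (R : V → V → Prop)
    (π : Fin (Fintype.card (CV G)) ≃ CV G) : Prop :=
  ∀ x y : V, R x y → x ≠ y → firstIdx G π x ≤ firstIdx G π y

/-- The set of vertices of `G` contained in one of the first `i` cliques of `π`. -/
def primPrefixVerts (G : SimpleGraph V) (π : Fin (Fintype.card (CV G)) ≃ CV G)
    (i : ℕ) : Set V :=
  {x | ∃ j : Fin (Fintype.card (CV G)), (j : ℕ) < i ∧ x ∈ (π j).1}


/-!
Let `S` be the common label. As `U1 ≠ U2`, the edge `U1U2` has weight `|S| = w`, and each of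
the four units contains a maximal clique containing `S`. For maximal cliques `P, Q ⊇ S`:

* if `P` and `Q` lie in one unit, then `P \ S` and `Q \ S` lie in one component of `G - S`,
  because every edge of a unit has weight `> w = |S|` and so shares a vertex outside `S`;
* if `P \ S` and `Q \ S` lie in one component `C` of `G - S`, then `P` and `Q` lie in one unit:
  in the chordal graph `G[S ∪ C]` they are joined by a chain of clique-graph edges whose ends
  contain `S` (delete a simplicial vertex, which exists by Dirac's lemma, and induct), and these
  edges have weight `> |S|` since `S` does not separate inside `C`.

So for units `A ≠ B` the sets `P \ S` and `Q \ S` lie in different components of `G - S`, which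
makes `PQ` an edge of `C(G)` with label `S`; and an edge `MM'` of `C(G)` between `A` and `B`
has `M ∩ M' ⊆ S` and weight at least `w = |S|`, hence label `S`.
-/

namespace SimpleGraph

variable {α : Type*} [DecidableEq α] {G : SimpleGraph α}

/-- Reachability in the induced subgraph `G[s]`. The whole argument works with vertex sets `s`
instead of induced subgraphs, so that the inductions can delete vertices without changing the
vertex type; `IsChordalIn`, `IsMaxCliqueIn` and `CliqueAdjIn` below are the matching relative
versions of `IsChordal`, `MaxClique` and adjacency in `cliqueGraph`. -/
def ReachIn (G : SimpleGraph α) (s : Finset α) (u v : α) : Prop :=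
  ∃ p : G.Walk u v, ∀ x ∈ p.support, x ∈ s

namespace ReachIn

variable {s t : Finset α} {u v w : α}

lemma mem_left (h : G.ReachIn s u v) : u ∈ s :=
  h.elim fun p hp => hp u p.start_mem_support

lemma mem_right (h : G.ReachIn s u v) : v ∈ s :=
  h.elim fun p hp => hp v p.end_mem_support

lemma refl (hu : u ∈ s) : G.ReachIn s u u :=
  ⟨.nil, by simpa using hu⟩

lemma symm (h : G.ReachIn s u v) : G.ReachIn s v u :=
  h.elim fun p hp => ⟨p.reverse, by simpa using hp⟩

lemma trans (h : G.ReachIn s u v) (h' : G.ReachIn s v w) : G.ReachIn s u w := by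
  obtain ⟨p, hp⟩ := h
  obtain ⟨q, hq⟩ := h'
  exact ⟨p.append q, fun x hx => (Walk.mem_support_append_iff p q).1 hx |>.elim (hp x) (hq x)⟩

lemma of_adj (hadj : G.Adj u v) (hu : u ∈ s) (hv : v ∈ s) : G.ReachIn s u v :=
  ⟨hadj.toWalk, by simp [hu, hv]⟩

lemma mono (hst : s ⊆ t) (h : G.ReachIn s u v) : G.ReachIn t u v :=
  h.elim fun p hp => ⟨p, fun x hx => hst (hp x hx)⟩

lemma of_mem_support {p : G.Walk u v} (hp : ∀ x ∈ p.support, x ∈ s) (hw : w ∈ p.support) :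
    G.ReachIn s u w :=
  ⟨p.takeUntil w hw, fun x hx => hp x (p.support_takeUntil_subset_support hw hx)⟩

lemma exists_adj_of_ne (h : G.ReachIn s u v) (hne : u ≠ v) :
    ∃ x ∈ s, G.Adj u x ∧ G.ReachIn s x v := by
  obtain ⟨p, hp⟩ := h
  cases p with
  | nil => exact absurd rfl hne
  | cons hadj q => exact ⟨_, hp _ (by simp), hadj, q, fun x hx => hp x (by simp [hx])⟩

lemma mem_of_closed {C : Finset α} (h : G.ReachIn s u v) (hu : u ∈ C)
    (hC : ∀ x ∈ C, ∀ y ∈ s, G.Adj x y → y ∈ C) : v ∈ C := by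
  obtain ⟨p, hp⟩ := h
  induction p with
  | nil => exact hu
  | cons hadj q ih =>
    exact ih (hC _ hu _ (hp _ (by simp)) hadj) fun x hx => hp x (by simp [hx])

lemma of_isClique {K : Finset α} (hK : G.IsClique (K : Set α)) (hu : u ∈ K) (hv : v ∈ K)
    (hus : u ∈ s) (hvs : v ∈ s) : G.ReachIn s u v := by
  obtain rfl | huv := eq_or_ne u v
  · exact .refl hus
  · exact .of_adj (hK hu hv huv) hus hvs

end ReachIn

noncomputable def componentIn (G : SimpleGraph α) (s : Finset α) (a : α) : Finset α :=
  s.filter (G.ReachIn s a)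

lemma mem_componentIn {s : Finset α} {a x : α} : x ∈ G.componentIn s a ↔ G.ReachIn s a x := by
  simp only [componentIn, Finset.mem_filter, and_iff_right_iff_imp]
  exact ReachIn.mem_right

lemma mem_componentIn_of_reachIn {s : Finset α} {a x y : α} (hx : x ∈ G.componentIn s a)
    (h : G.ReachIn s x y) : y ∈ G.componentIn s a :=
  mem_componentIn.2 ((mem_componentIn.1 hx).trans h)

lemma componentIn_subset {s : Finset α} {a : α} : G.componentIn s a ⊆ s :=
  Finset.filter_subset _ _

lemma ReachIn.inter_componentIn {s t : Finset α} {a u v : α} (h : G.ReachIn t u v) (hts : t ⊆ s)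
    (hu : u ∈ G.componentIn s a) : G.ReachIn (G.componentIn s a ∩ t) u v := by
  obtain ⟨p, hp⟩ := h
  refine ⟨p, fun z hz => Finset.mem_inter.2 ⟨mem_componentIn_of_reachIn hu ?_, hp z hz⟩⟩
  exact (ReachIn.of_mem_support hp hz).mono hts

lemma reachIn_componentIn {s : Finset α} {a x y : α} (hx : x ∈ G.componentIn s a)
    (hy : y ∈ G.componentIn s a) : G.ReachIn (G.componentIn s a) x y := by
  have ha : a ∈ G.componentIn s a := mem_componentIn.2 (.refl (mem_componentIn.1 hx).mem_left)
  have hax : ∀ {z}, z ∈ G.componentIn s a → G.ReachIn (G.componentIn s a) a z := fun hz =>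
    ((mem_componentIn.1 hz).inter_componentIn subset_rfl ha).mono Finset.inter_subset_left
  exact (hax hx).symm.trans (hax hy)

lemma ne_and_not_adj_of_mem_componentIn {s : Finset α} {a b x y : α}
    (hab : ¬ G.ReachIn s a b) (hx : x ∈ G.componentIn s a) (hy : y ∈ G.componentIn s b) :
    x ≠ y ∧ ¬ G.Adj x y := by
  rw [mem_componentIn] at hx hy
  refine ⟨fun h => hab (hx.trans (h ▸ hy.symm)), fun h => hab ?_⟩
  exact (hx.trans (.of_adj h hx.mem_right hy.mem_right)).trans hy.symm

lemma IsClique.subset_union_componentIn {s S K : Finset α} {a y : α}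
    (hK : G.IsClique (K : Set α)) (hKs : K ⊆ s) (hy : y ∈ K)
    (hyC : y ∈ G.componentIn (s \ S) a) : K ⊆ S ∪ G.componentIn (s \ S) a := by
  intro z hz
  by_cases hzS : z ∈ S
  · exact Finset.mem_union_left _ hzS
  · exact Finset.mem_union_right _ (mem_componentIn_of_reachIn hyC (.of_isClique hK hy hz
      (componentIn_subset hyC) (Finset.mem_sdiff.2 ⟨hKs hz, hzS⟩)))

namespace Walk

variable {u v : α}

def IsInducedPath (p : G.Walk u v) : Prop :=
  p.IsPath ∧ ∀ i j, i + 1 < j → j ≤ p.length → ¬ G.Adj (p.getVert i) (p.getVert j)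

lemma exists_shorter_of_adj_getVert (p : G.Walk u v) {i j : ℕ} (hij : i + 1 < j)
    (hj : j ≤ p.length) (hadj : G.Adj (p.getVert i) (p.getVert j)) :
    ∃ q : G.Walk u v, q.length < p.length ∧ ∀ x ∈ q.support, x ∈ p.support := by
  refine ⟨(p.take i).append (cons hadj (p.drop j)), by
    simp only [length_append, take_length, length_cons, drop_length]; omega, fun x hx => ?_⟩
  rw [mem_support_append_iff, support_take, support_cons, List.mem_cons,
    drop_support_eq_support_drop_min] at hx
  rcases hx with hx | rfl | hx
  · exact List.mem_of_mem_take hx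
  · exact getVert_mem_support _ _
  · exact List.mem_of_mem_drop hx

lemma exists_isInducedPath {P : α → Prop} (h : ∃ p : G.Walk u v, ∀ x ∈ p.support, P x) :
    ∃ p : G.Walk u v, (∀ x ∈ p.support, P x) ∧ p.IsInducedPath := by
  have hex : ∃ n, ∃ p : G.Walk u v, (∀ x ∈ p.support, P x) ∧ p.length = n :=
    h.elim fun p hp => ⟨_, p, hp, rfl⟩
  obtain ⟨p, hp, hlen⟩ := Nat.find_spec hex
  have hmin : ∀ q : G.Walk u v, (∀ x ∈ q.support, P x) → p.length ≤ q.length :=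
    fun q hq => hlen ▸ Nat.find_min' hex ⟨q, hq, rfl⟩
  have hbp : ∀ x ∈ p.bypass.support, P x := fun x hx => hp x (p.support_bypass_subset_support hx)
  refine ⟨p.bypass, hbp, p.bypass_isPath, fun i j hij hj hadj => ?_⟩
  obtain ⟨q, hq, hqs⟩ := p.bypass.exists_shorter_of_adj_getVert hij hj hadj
  have := hmin q fun x hx => hbp x (hqs x hx)
  have := p.length_bypass_le_length
  omega

lemma IsInducedPath.getVert_ne {p : G.Walk u v} (hp : p.IsInducedPath) {i j : ℕ} (hij : i < j)
    (hj : j ≤ p.length) : p.getVert i ≠ p.getVert j := fun h =>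
  hij.ne (hp.1.getVert_injOn (by simp only [Set.mem_ofPred_eq]; omega) hj h)

lemma IsInducedPath.adj_getVert_iff {p : G.Walk u v} (hp : p.IsInducedPath) {i j : ℕ}
    (hij : i < j) (hj : j ≤ p.length) :
    G.Adj (p.getVert i) (p.getVert j) ↔ j = i + 1 := by
  refine ⟨fun hadj => ?_, fun h => h ▸ p.adj_getVert_succ (by omega)⟩
  by_contra hne
  exact hp.2 i j (by omega) hj hadj

lemma two_le_length (p : G.Walk u v) (hne : u ≠ v) (hnadj : ¬ G.Adj u v) :
    2 ≤ p.length := by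
  rcases p with _ | ⟨h, _ | ⟨_, _⟩⟩
  · exact absurd rfl hne
  · exact absurd h hnadj
  · simp

end Walk

def IsChordalIn (G : SimpleGraph α) (s : Finset α) : Prop :=
  ∀ n : ℕ, 4 ≤ n →
    ¬ ∃ f : Fin n ↪ α, (∀ i, f i ∈ s) ∧ ∀ i j, (cycleGraph n).Adj i j ↔ G.Adj (f i) (f j)

lemma IsChordalIn.mono {s t : Finset α} (h : t ⊆ s) (hs : G.IsChordalIn s) : G.IsChordalIn t :=
  fun n hn ⟨f, hf, hadj⟩ => hs n hn ⟨f, fun i => h (hf i), hadj⟩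

lemma cycleGraph_adj_iff_of_lt {n : ℕ} {i j : Fin n} (hij : i < j) :
    (cycleGraph n).Adj i j ↔ (j : ℕ) = i + 1 ∨ ((i : ℕ) = 0 ∧ (j : ℕ) = n - 1) := by
  rw [cycleGraph_adj', Fin.coe_sub_iff_lt.2 hij, Fin.coe_sub_iff_le.2 hij.le]
  have := j.isLt
  omega

lemma not_isChordalIn_of_cycle {s : Finset α} {n : ℕ} (hn : 4 ≤ n) (f : ℕ → α)
    (hfs : ∀ i < n, f i ∈ s)
    (hf : ∀ i j, i < j → j < n →
      f i ≠ f j ∧ (G.Adj (f i) (f j) ↔ j = i + 1 ∨ (i = 0 ∧ j = n - 1))) :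
    ¬ G.IsChordalIn s := by
  have key : ∀ i j : Fin n, i < j → ((cycleGraph n).Adj i j ↔ G.Adj (f i) (f j)) :=
    fun i j hij => (cycleGraph_adj_iff_of_lt hij).trans (hf i j hij j.isLt).2.symm
  refine fun hs => hs n hn ⟨⟨fun i => f i, fun i j h => ?_⟩, fun i => hfs i i.isLt, ?_⟩
  · by_contra hne
    rcases lt_or_gt_of_ne hne with hij | hij
    · exact (hf i j hij j.isLt).1 h
    · exact (hf j i hij i.isLt).1 h.symm
  · intro i j
    rcases lt_trichotomy i j with hij | rfl | hij
    · exact key i j hij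
    · simp
    · rw [(cycleGraph n).adj_comm, G.adj_comm]
      exact key j i hij

theorem not_isChordalIn_of_isInducedPath {s : Finset α} {t u : α} {p q : G.Walk t u}
    (hp : p.IsInducedPath) (hq : q.IsInducedPath) (hp2 : 2 ≤ p.length) (hq2 : 2 ≤ q.length)
    (hps : ∀ x ∈ p.support, x ∈ s) (hqs : ∀ x ∈ q.support, x ∈ s)
    (hpq : ∀ i j, 0 < i → i < p.length → 0 < j → j < q.length →
      p.getVert i ≠ q.getVert j ∧ ¬ G.Adj (p.getVert i) (q.getVert j)) :
    ¬ G.IsChordalIn s := by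
  set k := p.length
  set m := q.length
  -- the cycle runs along `p` from `t` to `u` and back along `q`
  let f : ℕ → α := fun i => if i ≤ k then p.getVert i else q.getVert (k + m - i)
  have hfp : ∀ i ≤ k, f i = p.getVert i := fun i hi => if_pos hi
  have hfq : ∀ i, k ≤ i → f i = q.getVert (k + m - i) := by
    intro i hi
    rcases hi.eq_or_lt with rfl | hi
    · simp only [f, le_refl, if_true, add_tsub_cancel_left]
      exact p.getVert_length.trans q.getVert_length.symm
    · exact if_neg (by omega)
  refine not_isChordalIn_of_cycle (n := k + m) (by omega) f (fun i hi => ?_) fun i j hij hj => ?_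
  · rcases le_total i k with hi' | hi'
    · exact hfp i hi' ▸ hps _ (p.getVert_mem_support i)
    · exact hfq i hi' ▸ hqs _ (q.getVert_mem_support _)
  rcases le_or_gt j k with hjk | hkj
  · rw [hfp i (by omega), hfp j hjk, hp.adj_getVert_iff hij hjk]
    exact ⟨hp.getVert_ne hij hjk, by omega⟩
  rcases le_or_gt k i with hki | hik
  · rw [hfq i hki, hfq j hkj.le, G.adj_comm, hq.adj_getVert_iff (by omega) (by omega)]
    exact ⟨(hq.getVert_ne (by omega) (by omega)).symm, by omega⟩
  rw [hfp i hik.le, hfq j hkj.le]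
  rcases Nat.eq_zero_or_pos i with rfl | hi0
  · have hne := hq.getVert_ne (i := 0) (j := k + m - j) (by omega) (by omega)
    have hadj := hq.adj_getVert_iff (i := 0) (j := k + m - j) (by omega) (by omega)
    rw [Walk.getVert_zero] at hne hadj ⊢
    exact ⟨hne, hadj.trans (by omega)⟩
  · obtain ⟨hne, hnadj⟩ := hpq i (k + m - j) hi0 hik (by omega) (by omega)
    exact ⟨hne, iff_of_false hnadj (by omega)⟩

/-- Otherwise induced `t`-`u` paths through `A` and through `B` close up to an induced cycle. -/
lemma IsChordalIn.adj_of_reachIn {s A B : Finset α} (hs : G.IsChordalIn s) (hA : A ⊆ s)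
    (hB : B ⊆ s) (hAB : ∀ x ∈ A, ∀ y ∈ B, x ≠ y ∧ ¬ G.Adj x y) {t u : α} (ht : t ∈ s)
    (hu : u ∈ s) (htu : t ≠ u) (hRA : G.ReachIn (insert t (insert u A)) t u)
    (hRB : G.ReachIn (insert t (insert u B)) t u) : G.Adj t u := by
  by_contra hnadj
  have interior : ∀ {X : Finset α} {p : G.Walk t u},
      (∀ x ∈ p.support, x ∈ insert t (insert u X)) → p.IsInducedPath →
      ∀ i, 0 < i → i < p.length → p.getVert i ∈ X := by
    intro X p hpX hp i hi0 hi
    have h0 := hp.getVert_ne hi0 hi.le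
    have h1 := hp.getVert_ne hi le_rfl
    simp only [Walk.getVert_zero, Walk.getVert_length] at h0 h1
    simpa [h0.symm, h1] using hpX _ (p.getVert_mem_support i)
  have inS : ∀ {X : Finset α}, X ⊆ s → insert t (insert u X) ⊆ s := fun hX =>
    Finset.insert_subset ht (Finset.insert_subset hu hX)
  obtain ⟨p, hpA, hp⟩ := Walk.exists_isInducedPath hRA
  obtain ⟨q, hqB, hq⟩ := Walk.exists_isInducedPath hRB
  refine not_isChordalIn_of_isInducedPath hp hq (p.two_le_length htu hnadj)
    (q.two_le_length htu hnadj) (fun x hx => inS hA (hpA x hx)) (fun x hx => inS hB (hqB x hx))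
    (fun i j hi0 hi hj0 hj => hAB _ (interior hpA hp i hi0 hi) _ (interior hqB hq j hj0 hj)) hs

/-- For cliques `K` and `L` the minimality of the separator `K ∩ L` required in `cliqueGraph` is
automatic, as every vertex of `K ∩ L` is adjacent to all of `K ∪ L` (see `minSeparates_inter`). -/
def CliqueAdjIn (G : SimpleGraph α) (s K L : Finset α) : Prop :=
  K ≠ L ∧ ∀ u ∈ K \ L, ∀ v ∈ L \ K, ¬ G.ReachIn (s \ (K ∩ L)) u v

lemma CliqueAdjIn.symm {s K L : Finset α} (h : G.CliqueAdjIn s K L) : G.CliqueAdjIn s L K :=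
  ⟨h.1.symm, fun u hu v hv huv => h.2 v hv u hu (Finset.inter_comm K L ▸ huv.symm)⟩

def IsMaxCliqueIn (G : SimpleGraph α) (s K : Finset α) : Prop :=
  Maximal (fun K : Finset α => K ⊆ s ∧ G.IsClique (K : Set α)) K

lemma IsMaxCliqueIn.exists_mem_sdiff {s K L : Finset α} (hK : G.IsMaxCliqueIn s K)
    (hLs : L ⊆ s) (hL : G.IsClique (L : Set α)) (hne : K ≠ L) : ∃ x ∈ K, x ∉ L := by
  by_contra! h
  exact hne (hK.eq_of_le ⟨hLs, hL⟩ h)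

lemma exists_isMaxCliqueIn_superset {s c : Finset α} (hcs : c ⊆ s) (hc : G.IsClique (c : Set α)) :
    ∃ K, G.IsMaxCliqueIn s K ∧ c ⊆ K := by
  obtain ⟨K, hcK, hK⟩ := Finset.exists_le_maximal
    (s.powerset.filter fun K : Finset α => G.IsClique (K : Set α))
    (Finset.mem_filter.2 ⟨Finset.mem_powerset.2 hcs, hc⟩)
  refine ⟨K, ?_, hcK⟩
  simpa only [IsMaxCliqueIn, Finset.mem_filter, Finset.mem_powerset] using hK

noncomputable def nbrsIn (G : SimpleGraph α) (s : Finset α) (v : α) : Finset α :=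
  s.filter (G.Adj v)

def IsSimplicialIn (G : SimpleGraph α) (s : Finset α) (v : α) : Prop :=
  G.IsClique (G.nbrsIn s v : Set α)

section Simplicial

variable {s t K L : Finset α} {v : α}

lemma mem_nbrsIn {x : α} : x ∈ G.nbrsIn s v ↔ x ∈ s ∧ G.Adj v x :=
  Finset.mem_filter

lemma nbrsIn_subset_erase : G.nbrsIn s v ⊆ s.erase v := fun _ hx =>
  Finset.mem_erase.2 ⟨(mem_nbrsIn.1 hx).2.ne', (mem_nbrsIn.1 hx).1⟩

/-- On an induced path through `v`, the two neighbours of `v` would be adjacent. -/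
lemma ReachIn.erase_of_isSimplicialIn (hv : G.IsSimplicialIn s v) (hts : t ⊆ s) {a b : α}
    (h : G.ReachIn t a b) (ha : a ≠ v) (hb : b ≠ v) : G.ReachIn (t.erase v) a b := by
  obtain ⟨p, hpt, hp⟩ := Walk.exists_isInducedPath h
  refine ⟨p, fun x hx => Finset.mem_erase.2 ⟨?_, hpt x hx⟩⟩
  rintro rfl
  obtain ⟨i, rfl, hi⟩ := Walk.mem_support_iff_exists_getVert.1 hx
  have hi0 : i ≠ 0 := fun h => ha (by simp [h])
  have hil : i ≠ p.length := fun h => hb (by simp [h])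
  have hnbr : ∀ j, G.Adj (p.getVert i) (p.getVert j) → p.getVert j ∈ G.nbrsIn s (p.getVert i) :=
    fun j hadj => mem_nbrsIn.2 ⟨hts (hpt _ (p.getVert_mem_support j)), hadj⟩
  have hprev := (p.adj_getVert_succ (i := i - 1) (by omega)).symm
  have hnext := p.adj_getVert_succ (i := i) (by omega)
  rw [Nat.sub_add_cancel (by omega)] at hprev
  exact hp.2 (i - 1) (i + 1) (by omega) (by omega) <|
    hv (hnbr _ hprev) (hnbr _ hnext) (hp.getVert_ne (by omega) (by omega))

lemma IsSimplicialIn.isMaxCliqueIn_insert (hv : G.IsSimplicialIn s v) (hvs : v ∈ s) :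
    G.IsMaxCliqueIn s (insert v (G.nbrsIn s v)) := by
  refine ⟨⟨Finset.insert_subset hvs (nbrsIn_subset_erase.trans (Finset.erase_subset _ _)), ?_⟩,
    fun K hK hsub x hx => ?_⟩
  · rw [Finset.coe_insert]
    exact hv.insert fun x hx _ => (mem_nbrsIn.1 hx).2
  · obtain rfl | hxv := eq_or_ne x v
    · exact Finset.mem_insert_self _ _
    · exact Finset.mem_insert_of_mem <|
        mem_nbrsIn.2 ⟨hK.1 hx, hK.2 (hsub (Finset.mem_insert_self _ _)) hx hxv.symm⟩

lemma IsMaxCliqueIn.eq_insert_nbrsIn (hK : G.IsMaxCliqueIn s K) (hv : G.IsSimplicialIn s v)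
    (hvK : v ∈ K) : K = insert v (G.nbrsIn s v) := by
  refine hK.eq_of_le (hv.isMaxCliqueIn_insert (hK.prop.1 hvK)).prop fun x hx => ?_
  obtain rfl | hxv := eq_or_ne x v
  · exact Finset.mem_insert_self _ _
  · exact Finset.mem_insert_of_mem (mem_nbrsIn.2 ⟨hK.prop.1 hx, hK.prop.2 hvK hx hxv.symm⟩)

lemma IsMaxCliqueIn.erase (hK : G.IsMaxCliqueIn s K) (hvK : v ∉ K) :
    G.IsMaxCliqueIn (s.erase v) K :=
  ⟨⟨fun _ hx => Finset.mem_erase.2 ⟨fun h => hvK (h ▸ hx), hK.prop.1 hx⟩, hK.prop.2⟩,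
    fun _ hL => hK.2 ⟨hL.1.trans (Finset.erase_subset _ _), hL.2⟩⟩

lemma IsMaxCliqueIn.of_erase (hK : G.IsMaxCliqueIn (s.erase v) K) (hv : G.IsSimplicialIn s v)
    (hKN : K ≠ G.nbrsIn s v) : G.IsMaxCliqueIn s K := by
  refine ⟨⟨hK.prop.1.trans (Finset.erase_subset _ _), hK.prop.2⟩, fun L hL hKL => ?_⟩
  have hvL : v ∉ L := fun hvL => hKN <| hK.eq_of_le ⟨nbrsIn_subset_erase, hv⟩ fun x hx =>
    have hxs := Finset.mem_erase.1 (hK.prop.1 hx)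
    mem_nbrsIn.2 ⟨hxs.2, hL.2 hvL (hKL hx) (Ne.symm hxs.1)⟩
  exact hK.2 ⟨fun x hx => Finset.mem_erase.2 ⟨fun h => hvL (h ▸ hx), hL.1 hx⟩, hL.2⟩ hKL

lemma CliqueAdjIn.of_erase (h : G.CliqueAdjIn (s.erase v) K L) (hv : G.IsSimplicialIn s v)
    (hK : K ⊆ s.erase v) (hL : L ⊆ s.erase v) : G.CliqueAdjIn s K L := by
  refine ⟨h.1, fun u hu w hw huw => h.2 u hu w hw ?_⟩
  rw [Finset.erase_sdiff_comm]
  exact huw.erase_of_isSimplicialIn hv Finset.sdiff_subset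
    (Finset.mem_erase.1 (hK (Finset.mem_sdiff.1 hu).1)).1
    (Finset.mem_erase.1 (hL (Finset.mem_sdiff.1 hw).1)).1

lemma cliqueAdjIn_insert_nbrsIn_of_erase (h : G.CliqueAdjIn (s.erase v) (G.nbrsIn s v) L)
    (hv : G.IsSimplicialIn s v) (hL : L ⊆ s.erase v) :
    G.CliqueAdjIn s (insert v (G.nbrsIn s v)) L := by
  set N := G.nbrsIn s v
  have hvL : v ∉ L := fun h => (Finset.mem_erase.1 (hL h)).1 rfl
  have hinter : insert v N ∩ L = N ∩ L := Finset.insert_inter_of_notMem hvL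
  have hsdiff : L \ insert v N = L \ N := by
    rw [Finset.sdiff_insert, Finset.erase_eq_of_notMem (fun h => hvL (Finset.mem_sdiff.1 h).1)]
  have hN := (h.of_erase hv nbrsIn_subset_erase hL).2
  refine ⟨fun h => hvL (h ▸ Finset.mem_insert_self v N), fun u hu w hw huw => ?_⟩
  rw [hinter] at huw
  rw [hsdiff] at hw
  obtain ⟨hu, huL⟩ := Finset.mem_sdiff.1 hu
  rcases Finset.mem_insert.1 hu with rfl | huN
  · obtain ⟨x, hx, hux, hxw⟩ := huw.exists_adj_of_ne fun h => hvL (h ▸ (Finset.mem_sdiff.1 hw).1)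
    have hxN : x ∈ N := mem_nbrsIn.2 ⟨(Finset.mem_sdiff.1 hx).1, hux⟩
    exact hN x (Finset.mem_sdiff.2 ⟨hxN, fun hxL => (Finset.mem_sdiff.1 hx).2
      (Finset.mem_inter.2 ⟨hxN, hxL⟩)⟩) w hw hxw
  · exact hN u (Finset.mem_sdiff.2 ⟨huN, huL⟩) w hw huw

lemma cliqueAdjIn_insert_nbrsIn_of_subset (hNL : G.nbrsIn s v ⊆ L) (hvL : v ∉ L) :
    G.CliqueAdjIn s (insert v (G.nbrsIn s v)) L := by
  refine ⟨fun h => hvL (h ▸ Finset.mem_insert_self _ _), fun u hu w hw huw => ?_⟩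
  have hinter : insert v (G.nbrsIn s v) ∩ L = G.nbrsIn s v := by
    rw [Finset.insert_inter_of_notMem hvL, Finset.inter_eq_left.2 hNL]
  obtain ⟨hu, huL⟩ := Finset.mem_sdiff.1 hu
  obtain rfl : u = v := (Finset.mem_insert.1 hu).resolve_right fun h => huL (hNL h)
  rw [hinter] at huw
  -- every first step out of `u` enters the separator `N(u)`
  obtain ⟨x, hx, hux, -⟩ := huw.exists_adj_of_ne fun h => hvL (h ▸ (Finset.mem_sdiff.1 hw).1)
  exact (Finset.mem_sdiff.1 hx).2 (mem_nbrsIn.2 ⟨(Finset.mem_sdiff.1 hx).1, hux⟩)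

end Simplicial

section Dirac

variable {s T : Finset α} {a b : α}

lemma exists_minimal_separator (ha : a ∈ s) (hb : b ∈ s) (hab : a ≠ b) (hnadj : ¬ G.Adj a b) :
    ∃ T ⊆ s, a ∉ T ∧ b ∉ T ∧ ¬ G.ReachIn (s \ T) a b ∧
      ∀ t ∈ T, G.ReachIn (s \ T.erase t) a b := by
  set F := (s \ {a, b}).powerset.filter fun T => ¬ G.ReachIn (s \ T) a b
  have hF : s \ {a, b} ∈ F := by
    refine Finset.mem_filter.2 ⟨Finset.mem_powerset_self _, fun h => ?_⟩
    obtain ⟨x, hx, hax, -⟩ := h.exists_adj_of_ne hab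
    rw [Finset.sdiff_sdiff_eq_self (by simp [Finset.insert_subset_iff, ha, hb])] at hx
    rcases Finset.mem_insert.1 hx with rfl | hx
    · exact hax.ne rfl
    · exact hnadj (Finset.mem_singleton.1 hx ▸ hax)
  obtain ⟨T, -, ⟨hTF, hTmin⟩⟩ := F.exists_le_minimal hF
  obtain ⟨hTab, hT⟩ := Finset.mem_filter.1 hTF
  have hTab := Finset.mem_powerset.1 hTab
  refine ⟨T, hTab.trans Finset.sdiff_subset, fun h => by simpa using hTab h,
    fun h => by simpa using hTab h, hT, fun t ht => ?_⟩
  by_contra h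
  have hle := hTmin (Finset.mem_filter.2
    ⟨Finset.mem_powerset.2 ((Finset.erase_subset t T).trans hTab), h⟩) (Finset.erase_subset t T)
  exact Finset.notMem_erase t T (hle ht)

lemma exists_adj_of_reachIn_erase (haT : a ∉ T) (hab : ¬ G.ReachIn (s \ T) a b) {t : α}
    (h : G.ReachIn (s \ T.erase t) a b) : ∃ x ∈ G.componentIn (s \ T) a, G.Adj t x := by
  by_contra! hC
  refine hab (mem_componentIn.1 (h.mem_of_closed ?_ fun x hx y hy hxy => ?_))
  · exact mem_componentIn.2 (.refl (Finset.mem_sdiff.2 ⟨(Finset.mem_sdiff.1 h.mem_left).1, haT⟩))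
  · obtain ⟨hys, hyT⟩ := Finset.mem_sdiff.1 hy
    have hyt : y ≠ t := by rintro rfl; exact hC x hx hxy.symm
    have hy' : y ∈ s \ T := Finset.mem_sdiff.2 ⟨hys, fun h => hyT (Finset.mem_erase.2 ⟨hyt, h⟩)⟩
    exact mem_componentIn_of_reachIn hx (.of_adj hxy (componentIn_subset hx) hy')

lemma IsChordalIn.isClique_of_minimal_separator (hs : G.IsChordalIn s) (hTs : T ⊆ s)
    (haT : a ∉ T) (hbT : b ∉ T) (hab : ¬ G.ReachIn (s \ T) a b)
    (hmin : ∀ t ∈ T, G.ReachIn (s \ T.erase t) a b) : G.IsClique (T : Set α) := by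
  intro t ht u hu htu
  rw [Finset.mem_coe] at ht hu
  have hpath : ∀ {c d}, c ∉ T → ¬ G.ReachIn (s \ T) c d →
      (∀ t ∈ T, G.ReachIn (s \ T.erase t) c d) →
      G.ReachIn (insert t (insert u (G.componentIn (s \ T) c))) t u := by
    intro c d hcT hcd hcd'
    obtain ⟨x, hx, htx⟩ := exists_adj_of_reachIn_erase hcT hcd (hcd' t ht)
    obtain ⟨y, hy, huy⟩ := exists_adj_of_reachIn_erase hcT hcd (hcd' u hu)
    have hxy : G.ReachIn (insert t (insert u (G.componentIn (s \ T) c))) x y :=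
      (reachIn_componentIn hx hy).mono ((Finset.subset_insert _ _).trans (Finset.subset_insert _ _))
    exact ((ReachIn.of_adj htx (by simp) (by simp [hx])).trans hxy).trans
      (.of_adj huy.symm (by simp [hy]) (by simp))
  exact hs.adj_of_reachIn (componentIn_subset.trans Finset.sdiff_subset)
    (componentIn_subset.trans Finset.sdiff_subset)
    (fun x hx y hy => ne_and_not_adj_of_mem_componentIn hab hx hy) (hTs ht) (hTs hu) htu
    (hpath haT hab hmin) (hpath hbT (fun h => hab h.symm) fun t ht => (hmin t ht).symm)

lemma IsSimplicialIn.of_componentIn {z : α} (hz : z ∈ G.componentIn (s \ T) a)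
    (h : G.IsSimplicialIn (G.componentIn (s \ T) a ∪ T) z) : G.IsSimplicialIn s z := by
  refine h.subset (Finset.coe_subset.2 fun y hy => ?_)
  obtain ⟨hys, hzy⟩ := mem_nbrsIn.1 hy
  refine mem_nbrsIn.2 ⟨?_, hzy⟩
  by_cases hyT : y ∈ T
  · exact Finset.mem_union_right _ hyT
  · exact Finset.mem_union_left _ (mem_componentIn_of_reachIn hz
      (.of_adj hzy (componentIn_subset hz) (Finset.mem_sdiff.2 ⟨hys, hyT⟩)))

/-- Dirac's lemma. The clique `T₀` makes the induction go through: it is applied to one side of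
a minimal separator together with the separator. -/
theorem IsChordalIn.exists_isSimplicialIn {T₀ : Finset α} (hs : G.IsChordalIn s)
    (hT₀ : G.IsClique (T₀ : Set α)) (hsT₀ : ¬ s ⊆ T₀) :
    ∃ v ∈ s, v ∉ T₀ ∧ G.IsSimplicialIn s v := by
  induction s using Finset.strongInduction generalizing T₀ with
  | _ s ih =>
  by_cases hcl : G.IsClique (s : Set α)
  · obtain ⟨v, hv, hvT⟩ := Finset.not_subset.1 hsT₀
    exact ⟨v, hv, hvT, hcl.subset (Finset.coe_subset.2 (Finset.filter_subset _ _))⟩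
  obtain ⟨a, ha, b, hb, hab, hnadj⟩ : ∃ a ∈ s, ∃ b ∈ s, a ≠ b ∧ ¬ G.Adj a b := by
    simpa [IsClique, Set.Pairwise] using hcl
  obtain ⟨T, hTs, haT, hbT, hsep, hmin⟩ := exists_minimal_separator ha hb hab hnadj
  have hT := hs.isClique_of_minimal_separator hTs haT hbT hsep hmin
  have side : ∀ {c d}, c ∈ s → d ∈ s → c ∉ T → d ∉ T → ¬ G.ReachIn (s \ T) c d →
      ∃ z ∈ G.componentIn (s \ T) c, G.IsSimplicialIn s z := by
    intro c d hc hd hcT hdT hcd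
    have hcC : c ∈ G.componentIn (s \ T) c := mem_componentIn.2 (.refl (by simp [hc, hcT]))
    have hCT : G.componentIn (s \ T) c ∪ T ⊂ s := Finset.ssubset_iff_of_subset
      (Finset.union_subset (componentIn_subset.trans Finset.sdiff_subset) hTs) |>.2
      ⟨d, hd, by simp [hdT, mem_componentIn, hcd]⟩
    obtain ⟨z, hz, hzT, hzs⟩ := ih _ hCT (hs.mono hCT.subset) hT
      fun h => hcT (h (Finset.mem_union_left _ hcC))
    have hzC := (Finset.mem_union.1 hz).resolve_right hzT
    exact ⟨z, hzC, hzs.of_componentIn hzC⟩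
  obtain ⟨x, hx, hxs⟩ := side ha hb haT hbT hsep
  obtain ⟨y, hy, hys⟩ := side hb ha hbT haT fun h => hsep h.symm
  obtain ⟨hxy, hnxy⟩ := ne_and_not_adj_of_mem_componentIn hsep hx hy
  have hmem : ∀ {z c}, z ∈ G.componentIn (s \ T) c → z ∈ s := fun hz =>
    (Finset.mem_sdiff.1 (componentIn_subset hz)).1
  by_cases hxT₀ : x ∈ T₀
  · exact ⟨y, hmem hy, fun hyT₀ => hnxy (hT₀ hxT₀ hyT₀ hxy), hys⟩
  · exact ⟨x, hmem hx, hxT₀, hxs⟩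

end Dirac

section CliqueChain

open Relation

variable {s S K L : Finset α} {v : α}

def CliqueStep (G : SimpleGraph α) (s S K L : Finset α) : Prop :=
  G.CliqueAdjIn s K L ∧ G.IsMaxCliqueIn s K ∧ G.IsMaxCliqueIn s L ∧ S ⊆ K ∧ S ⊆ L

lemma CliqueStep.symm (h : G.CliqueStep s S K L) : G.CliqueStep s S L K :=
  ⟨h.1.symm, h.2.2.1, h.2.1, h.2.2.2.2, h.2.2.2.1⟩

lemma reflTransGen_cliqueStep_symm (h : ReflTransGen (G.CliqueStep s S) K L) :
    ReflTransGen (G.CliqueStep s S) L K :=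
  ReflTransGen.mono (fun _ _ => CliqueStep.symm) _ _ (ReflTransGen.swap _ _ h)

/-- Maximal cliques of `s.erase v` stay maximal in `s`, except `N(v)`, which grows to `N[v]`. -/
noncomputable def liftClique (G : SimpleGraph α) (s : Finset α) (v : α) (K : Finset α) :
    Finset α :=
  if K = G.nbrsIn s v then insert v (G.nbrsIn s v) else K

lemma subset_liftClique : K ⊆ G.liftClique s v K := by
  unfold liftClique
  split_ifs with h
  · exact h ▸ Finset.subset_insert _ _
  · exact subset_rfl

lemma IsMaxCliqueIn.liftClique (hK : G.IsMaxCliqueIn (s.erase v) K) (hv : G.IsSimplicialIn s v)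
    (hvs : v ∈ s) : G.IsMaxCliqueIn s (G.liftClique s v K) := by
  unfold SimpleGraph.liftClique
  split_ifs with h
  · exact hv.isMaxCliqueIn_insert hvs
  · exact hK.of_erase hv h

lemma CliqueStep.liftClique (h : G.CliqueStep (s.erase v) S K L) (hv : G.IsSimplicialIn s v)
    (hvs : v ∈ s) : G.CliqueStep s S (G.liftClique s v K) (G.liftClique s v L) := by
  obtain ⟨hKL, hK, hL, hSK, hSL⟩ := h
  refine ⟨?_, hK.liftClique hv hvs, hL.liftClique hv hvs, hSK.trans subset_liftClique,
    hSL.trans subset_liftClique⟩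
  unfold SimpleGraph.liftClique
  split_ifs with hKN hLN hLN
  · exact absurd (hKN.trans hLN.symm) hKL.1
  · subst hKN
    exact cliqueAdjIn_insert_nbrsIn_of_erase hKL hv hL.prop.1
  · subst hLN
    exact (cliqueAdjIn_insert_nbrsIn_of_erase hKL.symm hv hK.prop.1).symm
  · exact hKL.of_erase hv hK.prop.1 hL.prop.1

lemma exists_reflTransGen_liftClique (hK : G.IsMaxCliqueIn s K) (hSK : S ⊆ K)
    (hv : G.IsSimplicialIn s v) (hvs : v ∈ s) (hvS : v ∉ S) :
    ∃ K', G.IsMaxCliqueIn (s.erase v) K' ∧ S ⊆ K' ∧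
      ReflTransGen (G.CliqueStep s S) K (G.liftClique s v K') := by
  by_cases hvK : v ∈ K
  · have hKv := hK.eq_insert_nbrsIn hv hvK
    obtain ⟨M, hM, hNM⟩ := exists_isMaxCliqueIn_superset nbrsIn_subset_erase hv
    have hSM : S ⊆ M := fun x hx => hNM <|
      (Finset.mem_insert.1 (hKv ▸ hSK hx)).resolve_left fun h => hvS (h ▸ hx :)
    refine ⟨M, hM, hSM, ?_⟩
    unfold SimpleGraph.liftClique
    split_ifs with hMN
    · exact hKv ▸ .refl
    · refine .single ⟨?_, hK, hM.of_erase hv hMN, hSK, hSM⟩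
      exact hKv ▸ cliqueAdjIn_insert_nbrsIn_of_subset hNM fun h =>
        (Finset.mem_erase.1 (hM.prop.1 h)).1 rfl
  · refine ⟨K, hK.erase hvK, hSK, ?_⟩
    rw [SimpleGraph.liftClique, if_neg fun h => hvK ?_]
    rw [hK.eq_of_le (hv.isMaxCliqueIn_insert hvs).prop (h ▸ Finset.subset_insert _ _)]
    exact Finset.mem_insert_self _ _

/-- Induction on `s`: delete a simplicial vertex `v`; if `v ∈ S`, then `K = L = N[v]`. -/
theorem IsChordalIn.reflTransGen_cliqueStep (hs : G.IsChordalIn s) (hK : G.IsMaxCliqueIn s K)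
    (hL : G.IsMaxCliqueIn s L) (hSK : S ⊆ K) (hSL : S ⊆ L) :
    ReflTransGen (G.CliqueStep s S) K L := by
  induction s using Finset.strongInduction generalizing K L with
  | _ s ih =>
  obtain rfl | hKL := eq_or_ne K L
  · exact .refl
  obtain ⟨v, hvs, -, hv⟩ := hs.exists_isSimplicialIn (T₀ := ∅) (by simp) fun h => hKL <| by
    rw [Finset.subset_empty.1 (hK.prop.1.trans h), Finset.subset_empty.1 (hL.prop.1.trans h)]
  by_cases hvS : v ∈ S
  · exact absurd ((hK.eq_insert_nbrsIn hv (hSK hvS)).trans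
      (hL.eq_insert_nbrsIn hv (hSL hvS)).symm) hKL
  obtain ⟨K', hK', hSK', hKK'⟩ := exists_reflTransGen_liftClique hK hSK hv hvs hvS
  obtain ⟨L', hL', hSL', hLL'⟩ := exists_reflTransGen_liftClique hL hSL hv hvs hvS
  have hchain := ih _ (Finset.erase_ssubset hvs) (hs.mono (Finset.erase_subset _ _)) hK' hL'
    hSK' hSL'
  exact hKK'.trans <| (hchain.lift _ fun _ _ h => h.liftClique hv hvs).trans
    (reflTransGen_cliqueStep_symm hLL')

end CliqueChain

end SimpleGraph

section LayerStructure

open Finset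

variable {G : SimpleGraph V}

lemma MaxClique.isMaxCliqueIn {K s : Finset V} (hK : MaxClique G K) (hKs : K ⊆ s) :
    G.IsMaxCliqueIn s K :=
  ⟨⟨hKs, hK.1⟩, fun L hL hKL => (hK.2 L hL.2 hKL).ge⟩

lemma minSeparates_inter {K L : Finset V} (hK : G.IsClique (K : Set V))
    (hL : G.IsClique (L : Set V)) {u v : V} (hu : u ∈ K \ L) (hv : v ∈ L \ K)
    (h : Separates G (K ∩ L) u v) : MinSeparates G (K ∩ L) u v := by
  refine ⟨h, fun T hT hsep => ?_⟩
  obtain ⟨z, hz, hzT⟩ := exists_of_ssubset hT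
  obtain ⟨hzK, hzL⟩ := mem_inter.1 hz
  obtain ⟨huK, huL⟩ := mem_sdiff.1 hu
  obtain ⟨hvL, hvK⟩ := mem_sdiff.1 hv
  have huz : G.Adj u z := hK huK hzK fun h => huL (h ▸ hzL)
  have hzv : G.Adj z v := hL hzL hvL fun h => hvK (h ▸ hzK)
  obtain ⟨x, hx, hxT⟩ := hsep.2.2 (huz.toWalk.concat hzv)
  simp only [Walk.support_concat, Adj.support_toWalk, List.cons_append,
    List.nil_append, List.mem_cons, List.not_mem_nil, or_false] at hx
  rcases hx with rfl | rfl | rfl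
  exacts [hsep.1 hxT, hzT hxT, hsep.2.1 hxT]

lemma cliqueGraph_adj_iff {K L : CV G} :
    (cliqueGraph G).Adj K L ↔ G.CliqueAdjIn univ K.1 L.1 := by
  refine ⟨fun ⟨hne, h⟩ => ⟨fun h' => hne (Subtype.ext h'), fun u hu v hv ⟨p, hp⟩ => ?_⟩,
    fun ⟨hne, h⟩ => ⟨fun h' => hne (congrArg Subtype.val h'), fun u hu v hv =>
      minSeparates_inter K.2.1 L.2.1 hu hv ⟨fun h' => (mem_sdiff.1 hu).2 (mem_inter.1 h').2,
        fun h' => (mem_sdiff.1 hv).2 (mem_inter.1 h').1, fun p => ?_⟩⟩⟩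
  · obtain ⟨x, hx, hxT⟩ := (h u hu v hv).1.2.2 p
    exact (mem_sdiff.1 (hp x hx)).2 hxT
  · by_contra! hp
    exact h u hu v hv ⟨p, fun x hx => mem_sdiff.2 ⟨mem_univ _, hp x hx⟩⟩

lemma IsChordal.isChordalIn (h : IsChordal G) (s : Finset V) : G.IsChordalIn s :=
  fun n hn ⟨f, _, hf⟩ => h n hn ⟨f, hf⟩

lemma card_inter_eq_of_umk_ne {w : ℕ} {K K' : CV G} (hKK' : (cliqueGraph G).Adj K K')
    (h : umk G w K ≠ umk G w K') : (K.1 ∩ K'.1).card = w := by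
  by_contra hne
  exact h (ConnectedComponent.sound (Adj.reachable (G := unitGraph G w) ⟨hKK', hne⟩))

lemma not_subset_inter_of_cliqueGraph_adj {K K' : CV G} (hKK' : (cliqueGraph G).Adj K K')
    (M : CV G) : ¬ M.1 ⊆ K.1 ∩ K'.1 := fun hM => by
  have hMK := M.2.2 K.1 K.2.1 (hM.trans inter_subset_left)
  exact hKK'.1 (Subtype.ext (K.2.2 K'.1 K'.2.1 (hMK ▸ hM.trans inter_subset_right)))

section SameLabel

variable {w : ℕ} {S : Finset V}

lemma reachIn_of_unitGraph_walk (hw : IsMinEdgeWeight G w) (hS : S.card = w) {M N : CV G}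
    (p : (unitGraph G w).Walk M N) {x y : V} (hx : x ∈ M.1 \ S) (hy : y ∈ N.1 \ S) :
    G.ReachIn (univ \ S) x y := by
  induction p generalizing x with
  | @nil M =>
    exact .of_isClique M.2.1 (mem_sdiff.1 hx).1 (mem_sdiff.1 hy).1
      (by simpa using (mem_sdiff.1 hx).2) (by simpa using (mem_sdiff.1 hy).2)
  | @cons M N _ hadj q ih =>
    -- the edge `MN` has weight `> w = |S|`, so `M ∩ N` has a vertex outside `S`
    obtain ⟨z, hz, hzS⟩ := not_subset.1 fun hsub =>
      hadj.2 (le_antisymm (hS ▸ card_le_card hsub) (hw.2 M N hadj.1))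
    exact (ReachIn.of_isClique M.2.1 (mem_sdiff.1 hx).1 (mem_inter.1 hz).1
      (by simpa using (mem_sdiff.1 hx).2) (by simpa using hzS)).trans
      (ih (mem_sdiff.2 ⟨(mem_inter.1 hz).2, hzS⟩) hy)

lemma reachIn_of_umk_eq (hw : IsMinEdgeWeight G w) (hS : S.card = w) {M N : CV G}
    (h : umk G w M = umk G w N) {x y : V} (hx : x ∈ M.1 \ S) (hy : y ∈ N.1 \ S) :
    G.ReachIn (univ \ S) x y :=
  (ConnectedComponent.exact h).elim fun p => reachIn_of_unitGraph_walk hw hS p hx hy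

lemma cliqueGraph_adj_of_not_reachIn {P Q : CV G} (hSP : S ⊆ P.1) (hSQ : S ⊆ Q.1)
    (hP : ¬ P.1 ⊆ S) (hfar : ∀ x ∈ P.1 \ S, ∀ y ∈ Q.1 \ S, ¬ G.ReachIn (univ \ S) x y) :
    (cliqueGraph G).Adj P Q := by
  have hPQ : P.1 ∩ Q.1 = S := by
    refine subset_antisymm (fun z hz => ?_) (subset_inter hSP hSQ)
    by_contra hzS
    obtain ⟨hzP, hzQ⟩ := mem_inter.1 hz
    exact hfar z (mem_sdiff.2 ⟨hzP, hzS⟩) z (mem_sdiff.2 ⟨hzQ, hzS⟩) (.refl (by simpa using hzS))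
  refine cliqueGraph_adj_iff.2 ⟨fun h => hP ?_, fun u hu v hv => hPQ ▸ ?_⟩
  · rw [← hPQ, ← h, inter_self]
  · exact hfar u (sdiff_subset_sdiff subset_rfl hSQ hu) v (sdiff_subset_sdiff subset_rfl hSP hv)

lemma maxClique_of_isMaxCliqueIn_union_componentIn {R : Finset V} {a : V}
    (hR : G.IsMaxCliqueIn (S ∪ G.componentIn (univ \ S) a) R) (hRS : ¬ R ⊆ S) :
    MaxClique G R := by
  obtain ⟨c, hcR, hcS⟩ := not_subset.1 hRS
  have hcC := (mem_union.1 (hR.prop.1 hcR)).resolve_left hcS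
  exact ⟨hR.prop.2, fun K hK hRK =>
    hR.eq_of_le ⟨hK.subset_union_componentIn (subset_univ K) (hRK hcR) hcC, hK⟩ hRK⟩

lemma unitGraph_adj_of_cliqueStep (hS : S.card = w) {a : V} {R R' : CV G}
    (h : G.CliqueStep (S ∪ G.componentIn (univ \ S) a) S R.1 R'.1) :
    (unitGraph G w).Adj R R' := by
  set C := G.componentIn (univ \ S) a
  obtain ⟨hRR', hR, hR', hSR, hSR'⟩ := h
  have hC : ∀ {K L : Finset V}, K ⊆ S ∪ C → S ⊆ L → ∀ u ∈ K \ L, u ∈ C := fun hK hL u hu =>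
    (mem_union.1 (hK (mem_sdiff.1 hu).1)).resolve_left fun h => (mem_sdiff.1 hu).2 (hL h)
  refine ⟨cliqueGraph_adj_iff.2 ⟨hRR'.1, fun u hu v hv huv => hRR'.2 u hu v hv ?_⟩, fun hw => ?_⟩
  · refine (huv.inter_componentIn (sdiff_subset_sdiff subset_rfl (subset_inter hSR hSR'))
      (hC hR.prop.1 hSR' u hu)).mono fun z hz => ?_
    exact mem_sdiff.2 ⟨mem_union_right _ (mem_inter.1 hz).1, (mem_sdiff.1 (mem_inter.1 hz).2).2⟩
  · -- an edge of weight `w` would be labelled `S`, but `S` does not separate inside `C`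
    have hlab : R.1 ∩ R'.1 = S :=
      (eq_of_subset_of_card_le (subset_inter hSR hSR') (hw ▸ hS ▸ le_rfl)).symm
    obtain ⟨u, huR, huR'⟩ := hR.exists_mem_sdiff hR'.prop.1 hR'.prop.2 hRR'.1
    obtain ⟨v, hvR', hvR⟩ := hR'.exists_mem_sdiff hR.prop.1 hR.prop.2 hRR'.1.symm
    have hu := hC hR.prop.1 hSR' u (mem_sdiff.2 ⟨huR, huR'⟩)
    have hv := hC hR'.prop.1 hSR v (mem_sdiff.2 ⟨hvR', hvR⟩)
    refine hRR'.2 u (mem_sdiff.2 ⟨huR, huR'⟩) v (mem_sdiff.2 ⟨hvR', hvR⟩) ?_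
    rw [hlab]
    refine (reachIn_componentIn hu hv).mono fun z hz => mem_sdiff.2 ⟨mem_union_right _ hz, ?_⟩
    exact (mem_sdiff.1 (componentIn_subset hz)).2

lemma umk_eq_of_reachIn (hch : IsChordal G) (hS : S.card = w) {P Q : CV G} (hSP : S ⊆ P.1)
    (hSQ : S ⊆ Q.1) {x y : V} (hx : x ∈ P.1 \ S) (hy : y ∈ Q.1 \ S)
    (hxy : G.ReachIn (univ \ S) x y) : umk G w P = umk G w Q := by
  set C := G.componentIn (univ \ S) x
  have hxC : x ∈ C := mem_componentIn.2 (.refl hxy.mem_left)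
  have hP := P.2.isMaxCliqueIn
    (P.2.1.subset_union_componentIn (subset_univ _) (mem_sdiff.1 hx).1 hxC)
  have hQ := Q.2.isMaxCliqueIn (Q.2.1.subset_union_componentIn (subset_univ _) (mem_sdiff.1 hy).1
    (mem_componentIn.2 hxy))
  have hchain := (hch.isChordalIn _).reflTransGen_cliqueStep hP hQ hSP hSQ
  -- a maximal clique of `S ∪ C` inside `S` would equal `P`, which has a vertex outside `S`
  have hmax : ∀ {R}, G.IsMaxCliqueIn (S ∪ C) R → MaxClique G R := fun hR =>
    maxClique_of_isMaxCliqueIn_union_componentIn hR fun hRS => (mem_sdiff.1 hx).2 <|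
      hR.eq_of_le hP.prop (hRS.trans hSP) ▸ hRS <| (mem_sdiff.1 hx).1
  suffices ∀ R, Relation.ReflTransGen (G.CliqueStep (S ∪ C) S) P.1 R →
      ∀ hR : MaxClique G R, umk G w P = umk G w ⟨R, hR⟩ from this Q.1 hchain Q.2
  intro R h
  induction h with
  | refl => exact fun _ => rfl
  | tail _ hstep ih =>
    exact fun hR => (ih (hmax hstep.2.1)).trans
      (ConnectedComponent.sound (unitGraph_adj_of_cliqueStep hS hstep).reachable)

theorem layerGraph_adj_and_crossLabel (hch : IsChordal G) (hw : IsMinEdgeWeight G w)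
    {K K' : CV G} (hKK' : (cliqueGraph G).Adj K K') (hS : K.1 ∩ K'.1 = S) (hcard : S.card = w)
    {P Q : CV G} (hSP : S ⊆ P.1) (hSQ : S ⊆ Q.1) (hPQ : umk G w P ≠ umk G w Q) :
    (layerGraph G w).Adj (umk G w P) (umk G w Q) ∧
      CrossLabel G w (umk G w P) (umk G w Q) S := by
  have hout : ∀ M : CV G, ∃ x ∈ M.1, x ∉ S := fun M =>
    not_subset.1 (hS ▸ not_subset_inter_of_cliqueGraph_adj hKK' M)
  have hfar : ∀ x ∈ P.1 \ S, ∀ y ∈ Q.1 \ S, ¬ G.ReachIn (univ \ S) x y := fun x hx y hy hxy =>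
    hPQ (umk_eq_of_reachIn hch hcard hSP hSQ hx hy hxy)
  refine ⟨⟨hPQ, P, Q, cliqueGraph_adj_of_not_reachIn hSP hSQ
    (hS ▸ not_subset_inter_of_cliqueGraph_adj hKK' P) hfar, rfl, rfl⟩,
    fun M M' hMM' hM hM' => eq_of_subset_of_card_le (fun z hz => ?_) (hcard ▸ hw.2 M M' hMM')⟩
  -- a vertex `z ∉ S` of `M ∩ M'` would join `P \ S` to `Q \ S` in `G - S`
  by_contra hzS
  obtain ⟨x, hxP, hxS⟩ := hout P
  obtain ⟨y, hyQ, hyS⟩ := hout Q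
  exact hfar x (mem_sdiff.2 ⟨hxP, hxS⟩) y (mem_sdiff.2 ⟨hyQ, hyS⟩)
    ((reachIn_of_umk_eq hw hcard hM.symm (mem_sdiff.2 ⟨hxP, hxS⟩)
      (mem_sdiff.2 ⟨(mem_inter.1 hz).1, hzS⟩)).trans
    (reachIn_of_umk_eq hw hcard hM' (mem_sdiff.2 ⟨(mem_inter.1 hz).2, hzS⟩)
      (mem_sdiff.2 ⟨hyQ, hyS⟩)))

end SameLabel

end LayerStructure

theorem stmt8_general (G : SimpleGraph V) (hch : IsChordal G)
    (w : ℕ) (hw : IsMinEdgeWeight G w) (U1 U2 U3 U4 : LUnit G w)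
    (h12 : (layerGraph G w).Adj U1 U2) (S : Finset V)
    (hS12 : ∃ K K' : CV G, (cliqueGraph G).Adj K K' ∧ umk G w K = U1 ∧ umk G w K' = U2 ∧
      K.1 ∩ K'.1 = S)
    (hS34 : ∃ K K' : CV G, (cliqueGraph G).Adj K K' ∧ umk G w K = U3 ∧ umk G w K' = U4 ∧
      K.1 ∩ K'.1 = S) :
    ∀ A ∈ ({U1, U2, U3, U4} : Set (LUnit G w)), ∀ B ∈ ({U1, U2, U3, U4} : Set (LUnit G w)),
      A ≠ B → (layerGraph G w).Adj A B ∧ CrossLabel G w A B S := by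
  obtain ⟨K1, K1', hadj1, rfl, rfl, hlab1⟩ := hS12
  obtain ⟨K3, K3', -, rfl, rfl, hlab3⟩ := hS34
  have hcard : S.card = w := hlab1 ▸ card_inter_eq_of_umk_ne hadj1 h12.ne
  have hunit : ∀ A ∈ ({umk G w K1, umk G w K1', umk G w K3, umk G w K3'} : Set (LUnit G w)),
      ∃ P : CV G, umk G w P = A ∧ S ⊆ P.1 := by
    simp only [Set.mem_insert_iff, Set.mem_singleton_iff]
    rintro A (rfl | rfl | rfl | rfl)
    exacts [⟨K1, rfl, hlab1 ▸ Finset.inter_subset_left⟩,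
      ⟨K1', rfl, hlab1 ▸ Finset.inter_subset_right⟩, ⟨K3, rfl, hlab3 ▸ Finset.inter_subset_left⟩,
      ⟨K3', rfl, hlab3 ▸ Finset.inter_subset_right⟩]
  intro A hA B hB hAB
  obtain ⟨P, rfl, hSP⟩ := hunit A hA
  obtain ⟨Q, rfl, hSQ⟩ := hunit B hB
  exact layerGraph_adj_and_crossLabel hch hw hadj1 hlab1 hcard hSP hSQ hAB

/-- if `U1U2` and `U3U4` are two distinct edges of the layer structure with
the same label `S`, then the units in `{U1, U2, U3, U4}` are pairwise adjacent, and all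
edges among them have label `S`. -/
theorem stmt8 (G : SimpleGraph V) (hG : G.Connected) (hch : IsChordal G)
    (w : ℕ) (hw : IsMinEdgeWeight G w) (U1 U2 U3 U4 : LUnit G w)
    (h12 : (layerGraph G w).Adj U1 U2) (h34 : (layerGraph G w).Adj U3 U4)
    (hdist : s(U1, U2) ≠ s(U3, U4)) (S : Finset V)
    (hS12 : ∃ K K' : CV G, (cliqueGraph G).Adj K K' ∧ umk G w K = U1 ∧ umk G w K' = U2 ∧
      K.1 ∩ K'.1 = S)
    (hS34 : ∃ K K' : CV G, (cliqueGraph G).Adj K K' ∧ umk G w K = U3 ∧ umk G w K' = U4 ∧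
      K.1 ∩ K'.1 = S) :
    ∀ A ∈ ({U1, U2, U3, U4} : Set (LUnit G w)), ∀ B ∈ ({U1, U2, U3, U4} : Set (LUnit G w)),
      A ≠ B → (layerGraph G w).Adj A B ∧ CrossLabel G w A B S :=
  stmt8_general G hch w hw U1 U2 U3 U4 h12 S hS12 hS34
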